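/- arXiv:1301.2831 — 7 statements merged into one kernel-verified Lean document; each statement's English description precedes it below -/
import Mathlib

section
/- Let U and V be closed subspaces of H with U ⊕ V = H (direct internal sum). Let W_{UV} be the (bounded) projection of H with range U and kernel V. If U ≠ {0} and V ≠ {0}, then ‖W_{UV}‖ = ‖I − W_{UV}‖ = sec(θ_{U,V⊥}). -/
/-!
The vectors mapped by `W` to `u ∈ U` form the affine subspace `u + V`, whose element of least
norm is `Q_{V⊥} u`. Hence `‖W‖ = sup_{0 ≠ u ∈ U} ‖u‖ / ‖Q_{V⊥} u‖ = sec θ_{U,V⊥}`. Since `I - W` is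
the projection with range `V` and kernel `U`, the second identity amounts to the symmetry
`cos θ_{U,V⊥} = cos θ_{V,U⊥}`. For a unit vector `u ∈ U` this follows from
`‖Q_{U⊥} Q_V u‖ ≤ ‖Q_V u‖ ‖Q_{V⊥} u‖`, a consequence of `‖Q_V u‖² = ⟪Q_V u, u⟫ ≤ ‖Q_U Q_V u‖`
and Pythagoras.
-/

open Submodule

variable {H : Type*}

/-- The cosine of the subspace angle `θ_{U,W}` between subspaces `U` and `W`:
`cos θ_{U,W} = inf_{u ∈ U, ‖u‖ = 1} ‖Q_W u‖`. -/
noncomputable def cosAngle [NormedAddCommGroup H] [InnerProductSpace ℂ H]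
    (U W : Submodule ℂ H) [HasOrthogonalProjection W] : ℝ :=
  sInf {r : ℝ | ∃ u ∈ U, ‖u‖ = 1 ∧ r = ‖(orthogonalProjection W u : H)‖}

section Projection

variable {𝕜 E : Type*} [RCLike 𝕜] [NormedAddCommGroup E] [InnerProductSpace 𝕜 E]

theorem Submodule.norm_starProjection_le_norm_sub (K : Submodule 𝕜 E) [K.HasOrthogonalProjection]
    (y : E) {z : E} (hz : z ∈ Kᗮ) : ‖K.starProjection y‖ ≤ ‖y - z‖ := by
  calc ‖K.starProjection y‖ = ‖K.starProjection (y - z)‖ := by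
        rw [map_sub, K.starProjection_apply_eq_zero_iff.mpr hz, sub_zero]
    _ ≤ ‖y - z‖ := K.norm_starProjection_apply_le _

open RCLike in
theorem Submodule.norm_mul_norm_starProjection_orthogonal_starProjection_le
    {U V : Submodule 𝕜 E} [U.HasOrthogonalProjection] [V.HasOrthogonalProjection]
    {u : E} (hu : u ∈ U) :
    ‖u‖ * ‖Uᗮ.starProjection (V.starProjection u)‖ ≤
      ‖V.starProjection u‖ * ‖Vᗮ.starProjection u‖ := by
  set p := V.starProjection u
  have hpU : ‖p‖ ^ 2 ≤ ‖U.starProjection p‖ * ‖u‖ :=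
    calc ‖p‖ ^ 2 = re (inner 𝕜 p u) := (V.re_inner_starProjection_eq_normSq u).symm
      _ ≤ ‖inner 𝕜 p u‖ := re_le_norm _
      _ = ‖inner 𝕜 (U.starProjection p) u‖ := by
        rw [U.inner_starProjection_left_eq_right p u, starProjection_eq_self_iff.mpr hu]
      _ ≤ ‖U.starProjection p‖ * ‖u‖ := norm_inner_le_norm _ _
  have hpythU := U.norm_sq_eq_add_norm_sq_starProjection p
  have hpythV := V.norm_sq_eq_add_norm_sq_starProjection u
  have hsq : (‖u‖ * ‖Uᗮ.starProjection p‖) ^ 2 ≤ (‖p‖ * ‖Vᗮ.starProjection u‖) ^ 2 := by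
    nlinarith [mul_le_mul hpU hpU (sq_nonneg _) (by positivity)]
  exact (pow_le_pow_iff_left₀ (by positivity) (by positivity) two_ne_zero).mp hsq

end Projection

section CosAngle

variable [NormedAddCommGroup H] [InnerProductSpace ℂ H] {U V K : Submodule ℂ H}
  [K.HasOrthogonalProjection]

theorem cosAngle_le {u : H} (hu : u ∈ U) (hu1 : ‖u‖ = 1) :
    cosAngle U K ≤ ‖K.starProjection u‖ :=
  csInf_le ⟨0, by rintro r ⟨u, -, -, rfl⟩; exact norm_nonneg _⟩ ⟨u, hu, hu1, rfl⟩

theorem le_cosAngle (hU : U ≠ ⊥) {c : ℝ}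
    (h : ∀ u ∈ U, ‖u‖ = 1 → c ≤ ‖K.starProjection u‖) : c ≤ cosAngle U K := by
  obtain ⟨u, hu, hu0⟩ := exists_mem_ne_zero_of_ne_bot hU
  refine le_csInf ⟨_, (‖u‖⁻¹ : ℂ) • u, U.smul_mem _ hu, norm_smul_inv_norm hu0, rfl⟩ ?_
  rintro r ⟨u, hu, hu1, rfl⟩
  exact h u hu hu1

theorem cosAngle_mul_norm_le {u : H} (hu : u ∈ U) :
    cosAngle U K * ‖u‖ ≤ ‖K.starProjection u‖ := by
  rcases eq_or_ne u 0 with rfl | hu0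
  · simp
  have h := cosAngle_le (K := K) (U.smul_mem (‖u‖⁻¹ : ℂ) hu) (norm_smul_inv_norm hu0)
  rw [map_smul, norm_smul, norm_inv, Complex.norm_real, norm_norm,
    le_inv_mul_iff₀ (norm_pos_iff.mpr hu0)] at h
  linarith

theorem cosAngle_le_one (hU : U ≠ ⊥) : cosAngle U K ≤ 1 := by
  obtain ⟨u, hu, hu0⟩ := exists_mem_ne_zero_of_ne_bot hU
  have hu1 : ‖(‖u‖⁻¹ : ℂ) • u‖ = 1 := norm_smul_inv_norm hu0
  exact (cosAngle_le (U.smul_mem _ hu) hu1).trans (hu1 ▸ K.norm_starProjection_apply_le _)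

theorem cosAngle_orthogonal_le [U.HasOrthogonalProjection] [V.HasOrthogonalProjection]
    (hU : U ≠ ⊥) (hV : V ≠ ⊥) : cosAngle V Uᗮ ≤ cosAngle U Vᗮ := by
  refine le_cosAngle hU fun u hu hu1 => ?_
  have hpq : cosAngle V Uᗮ * ‖V.starProjection u‖ ≤
      ‖V.starProjection u‖ * ‖Vᗮ.starProjection u‖ :=
    calc cosAngle V Uᗮ * ‖V.starProjection u‖
        ≤ ‖Uᗮ.starProjection (V.starProjection u)‖ :=
          cosAngle_mul_norm_le (V.starProjection_apply_mem u)
      _ = ‖u‖ * ‖Uᗮ.starProjection (V.starProjection u)‖ := by rw [hu1, one_mul]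
      _ ≤ _ := norm_mul_norm_starProjection_orthogonal_starProjection_le hu
  rcases eq_or_lt_of_le (norm_nonneg (V.starProjection u)) with hp | hp
  · have hq : ‖Vᗮ.starProjection u‖ = 1 := by
      have := V.norm_sq_eq_add_norm_sq_starProjection u
      rw [hu1, ← hp] at this
      nlinarith [norm_nonneg (Vᗮ.starProjection u)]
    exact hq ▸ cosAngle_le_one hV
  · exact le_of_mul_le_mul_right (by linarith) hp

theorem cosAngle_orthogonal_comm [U.HasOrthogonalProjection] [V.HasOrthogonalProjection]
    (hU : U ≠ ⊥) (hV : V ≠ ⊥) : cosAngle U Vᗮ = cosAngle V Uᗮ :=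
  (cosAngle_orthogonal_le hV hU).antisymm (cosAngle_orthogonal_le hU hV)

end CosAngle

namespace ContinuousLinearMap.IsIdempotentElem

variable [NormedAddCommGroup H] [InnerProductSpace ℂ H] {P : H →L[ℂ] H}
  {U V : Submodule ℂ H} [Vᗮ.HasOrthogonalProjection]

theorem norm_le_opNorm_mul_norm_starProjection [CompleteSpace H] (hP : IsIdempotentElem P)
    (hrange : LinearMap.range (P : H →ₗ[ℂ] H) = U) (hker : LinearMap.ker (P : H →ₗ[ℂ] H) = V)
    {u : H} (hu : u ∈ U) : ‖u‖ ≤ ‖P‖ * ‖Vᗮ.starProjection u‖ := by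
  have : CompleteSpace V := (hker ▸ P.isClosed_ker).completeSpace_coe
  have hPu : P u = u := by
    obtain ⟨y, rfl⟩ := hrange ▸ hu
    exact DFunLike.congr_fun hP y
  have hPV : P (V.starProjection u) = 0 :=
    (hker ▸ V.starProjection_apply_mem u : V.starProjection u ∈ LinearMap.ker (P : H →ₗ[ℂ] H))
  calc ‖u‖ = ‖P (Vᗮ.starProjection u)‖ := by
        rw [starProjection_orthogonal_val, map_sub, hPV, hPu, sub_zero]
    _ ≤ ‖P‖ * ‖Vᗮ.starProjection u‖ := P.le_opNorm _

theorem cosAngle_mul_norm_apply_le (hP : IsIdempotentElem P)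
    (hrange : LinearMap.range (P : H →ₗ[ℂ] H) = U) (hker : LinearMap.ker (P : H →ₗ[ℂ] H) = V)
    (x : H) : cosAngle U Vᗮ * ‖P x‖ ≤ ‖x‖ := by
  have hPx : P x - x ∈ V := by
    rw [← hker, LinearMap.mem_ker, coe_coe, map_sub, sub_eq_zero]
    exact DFunLike.congr_fun hP x
  calc cosAngle U Vᗮ * ‖P x‖ ≤ ‖Vᗮ.starProjection (P x)‖ :=
        cosAngle_mul_norm_le (hrange ▸ LinearMap.mem_range_self _ x)
    _ ≤ ‖P x - (P x - x)‖ :=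
        Vᗮ.norm_starProjection_le_norm_sub _ (V.le_orthogonal_orthogonal hPx)
    _ = ‖x‖ := by rw [sub_sub_cancel]

theorem opNorm_eq_inv_cosAngle [CompleteSpace H] (hP : IsIdempotentElem P)
    (hrange : LinearMap.range (P : H →ₗ[ℂ] H) = U) (hker : LinearMap.ker (P : H →ₗ[ℂ] H) = V)
    (hU : U ≠ ⊥) : ‖P‖ = (cosAngle U Vᗮ)⁻¹ := by
  obtain ⟨u, hu, hu0⟩ := exists_mem_ne_zero_of_ne_bot hU
  have hP0 : 0 < ‖P‖ := pos_of_mul_pos_left ((norm_pos_iff.mpr hu0).trans_le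
    (norm_le_opNorm_mul_norm_starProjection hP hrange hker hu)) (norm_nonneg _)
  have hinv : ‖P‖⁻¹ ≤ cosAngle U Vᗮ := le_cosAngle hU fun u hu hu1 => by
    rw [inv_le_iff_one_le_mul₀ hP0, mul_comm, ← hu1]
    exact norm_le_opNorm_mul_norm_starProjection hP hrange hker hu
  have hc : 0 < cosAngle U Vᗮ := (inv_pos.mpr hP0).trans_le hinv
  refine le_antisymm (P.opNorm_le_bound (inv_nonneg.mpr hc.le) fun x => ?_)
    (inv_le_of_inv_le₀ hP0 hinv)
  rw [inv_mul_eq_div, le_div_iff₀ hc, mul_comm]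
  exact cosAngle_mul_norm_apply_le hP hrange hker x

theorem range_id_sub (hP : IsIdempotentElem P) :
    LinearMap.range ((ContinuousLinearMap.id ℂ H - P : H →L[ℂ] H) : H →ₗ[ℂ] H) =
      LinearMap.ker (P : H →ₗ[ℂ] H) := by
  rw [toLinearMap_sub, coe_id, LinearMap.IsIdempotentElem.ker_eq_range (toLinearMap hP)]

theorem ker_id_sub (hP : IsIdempotentElem P) :
    LinearMap.ker ((ContinuousLinearMap.id ℂ H - P : H →L[ℂ] H) : H →ₗ[ℂ] H) =
      LinearMap.range (P : H →ₗ[ℂ] H) := by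
  rw [toLinearMap_sub, coe_id, LinearMap.IsIdempotentElem.range_eq_ker (toLinearMap hP)]

end ContinuousLinearMap.IsIdempotentElem

open ContinuousLinearMap.IsIdempotentElem

theorem stmt1_general [NormedAddCommGroup H] [InnerProductSpace ℂ H] [CompleteSpace H]
    (U V : Submodule ℂ H) (hU : IsClosed (U : Set H)) (hV : IsClosed (V : Set H))
    [HasOrthogonalProjection Vᗮ]
    (W : H →L[ℂ] H)
    (hrange : LinearMap.range (W : H →ₗ[ℂ] H) = U) (hker : LinearMap.ker (W : H →ₗ[ℂ] H) = V)
    (hproj : ∀ u ∈ U, W u = u)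
    (hU0 : U ≠ ⊥) (hV0 : V ≠ ⊥) :
    ‖W‖ = (cosAngle U Vᗮ)⁻¹ ∧ ‖ContinuousLinearMap.id ℂ H - W‖ = (cosAngle U Vᗮ)⁻¹ := by
  have : CompleteSpace U := hU.completeSpace_coe
  have : CompleteSpace V := hV.completeSpace_coe
  have hW : IsIdempotentElem W :=
    ContinuousLinearMap.ext fun x => hproj _ (hrange ▸ LinearMap.mem_range_self _ x)
  refine ⟨opNorm_eq_inv_cosAngle hW hrange hker hU0, ?_⟩
  rw [cosAngle_orthogonal_comm hU0 hV0]
  exact opNorm_eq_inv_cosAngle hW.one_sub ((range_id_sub hW).trans hker)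
    ((ker_id_sub hW).trans hrange) hV0

/-- if `H = U ⊕ V` with `U, V` closed and nontrivial, and `W` is the bounded
projection with range `U` and kernel `V`, then `‖W‖ = ‖I - W‖ = sec θ_{U,Vᗮ}`. -/
theorem stmt1 [NormedAddCommGroup H] [InnerProductSpace ℂ H] [CompleteSpace H]
    (U V : Submodule ℂ H) (hU : IsClosed (U : Set H)) (hV : IsClosed (V : Set H))
    [HasOrthogonalProjection Vᗮ]
    (hcompl : IsCompl U V)
    (W : H →L[ℂ] H)
    (hrange : LinearMap.range (W : H →ₗ[ℂ] H) = U) (hker : LinearMap.ker (W : H →ₗ[ℂ] H) = V)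
    (hproj : ∀ u ∈ U, W u = u)
    (hU0 : U ≠ ⊥) (hV0 : V ≠ ⊥) :
    ‖W‖ = (cosAngle U Vᗮ)⁻¹ ∧ ‖ContinuousLinearMap.id ℂ H - W‖ = (cosAngle U Vᗮ)⁻¹ :=
  stmt1_general U V hU hV W hrange hker hproj hU0 hV0
end

section
/- Let U and V be closed subspaces of H with cos(θ_{U,V⊥}) > 0, and let W = W_{UV} : H₀ → U be the oblique projection with range U and kernel V, where H₀ = U ⊕ V. Then for all f ∈ H₀, ‖f − Q_U f‖ ≤ ‖f − W f‖ ≤ sec(θ_{U,V⊥}) ‖f − Q_U f‖, where Q_U is the orthogonal projection onto U. -/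
/-!
Write `f = u + v` with `u ∈ U`, `v ∈ V`; then `f - W f = v` and `f - Q_U f = v - Q_U v`, and the lower
bound is the best-approximation property of `Q_U`. For the upper bound let `c = cos θ_{U,Vᗮ}` and
`q = Q_U v`. As `v ∈ V ⊆ Vᗮᗮ`, `‖q‖² = Re ⟪q, v⟫ = Re ⟪Q_{Vᗮᗮ} q, v⟫ ≤ ‖Q_{Vᗮᗮ} q‖ ‖v‖`, while `q ∈ U`
gives `‖Q_{Vᗮᗮ} q‖² = ‖q‖² - ‖Q_{Vᗮ} q‖² ≤ (1 - c²) ‖q‖²`. Hence `‖q‖² ≤ (1 - c²) ‖v‖²`, and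
Pythagoras turns this into `c ‖v‖ ≤ ‖v - q‖`.
-/

open Submodule

variable {H : Type*}

open RCLike
open scoped InnerProductSpace

section Projection

variable {𝕜 E : Type*} [RCLike 𝕜] [NormedAddCommGroup E] [InnerProductSpace 𝕜 E]
  {K : Submodule 𝕜 E} [K.HasOrthogonalProjection]

lemma Submodule.norm_sub_starProjection_le_norm_sub (f : E) {u : E} (hu : u ∈ K) :
    ‖f - K.starProjection f‖ ≤ ‖f - u‖ := by
  rw [starProjection_minimal]
  exact ciInf_le ⟨0, Set.forall_mem_range.2 fun _ => norm_nonneg _⟩ (⟨u, hu⟩ : K)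

lemma Submodule.re_inner_le_norm_starProjection_mul_norm (x : E) {v : E} (hv : v ∈ K) :
    re ⟪x, v⟫_𝕜 ≤ ‖K.starProjection x‖ * ‖v‖ := by
  calc re ⟪x, v⟫_𝕜 = re ⟪K.starProjection x, v⟫_𝕜 := by
        rw [inner_starProjection_left_eq_right, starProjection_eq_self_iff.mpr hv]
    _ ≤ ‖K.starProjection x‖ * ‖v‖ := re_inner_le_norm _ _

end Projection

section CosAngle

variable [NormedAddCommGroup H] [InnerProductSpace ℂ H]

lemma cosAngle_nonneg (U W : Submodule ℂ H) [W.HasOrthogonalProjection] :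
    0 ≤ cosAngle U W :=
  Real.sInf_nonneg fun _ ⟨_, _, _, hr⟩ => hr ▸ norm_nonneg _

lemma cosAngle_le_norm_starProjection {U : Submodule ℂ H} (W : Submodule ℂ H)
    [W.HasOrthogonalProjection] {u : H} (hu : u ∈ U) (hu1 : ‖u‖ = 1) :
    cosAngle U W ≤ ‖W.starProjection u‖ :=
  csInf_le ⟨0, fun _ ⟨_, _, _, hr⟩ => hr ▸ norm_nonneg _⟩ ⟨u, hu, hu1, rfl⟩

lemma cosAngle_le_one_s2 (U W : Submodule ℂ H) [W.HasOrthogonalProjection] :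
    cosAngle U W ≤ 1 := by
  by_cases h : ∃ u ∈ U, ‖u‖ = 1
  · obtain ⟨u, hu, hu1⟩ := h
    calc cosAngle U W ≤ ‖W.starProjection u‖ := cosAngle_le_norm_starProjection W hu hu1
      _ ≤ ‖u‖ := W.norm_starProjection_apply_le u
      _ = 1 := hu1
  · refine (Real.sInf_nonpos ?_).trans zero_le_one
    rintro _ ⟨u, hu, hu1, -⟩
    exact (h ⟨u, hu, hu1⟩).elim

lemma cosAngle_mul_norm_le_norm_starProjection {U : Submodule ℂ H} (W : Submodule ℂ H)
    [W.HasOrthogonalProjection] {u : H} (hu : u ∈ U) :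
    cosAngle U W * ‖u‖ ≤ ‖W.starProjection u‖ := by
  rcases eq_or_ne u 0 with rfl | hu0
  · simp
  have hnorm : ‖u‖ ≠ 0 := norm_ne_zero_iff.mpr hu0
  have h := cosAngle_le_norm_starProjection W (U.smul_mem ((‖u‖⁻¹ : ℝ) : ℂ) hu)
    (by rw [norm_smul]; simp [hnorm])
  rw [map_smul, norm_smul] at h
  simp only [Complex.norm_real, norm_inv, norm_norm] at h
  rwa [le_inv_mul_iff₀ (by positivity), mul_comm] at h

variable {U V : Submodule ℂ H} [U.HasOrthogonalProjection] [Vᗮ.HasOrthogonalProjection]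

lemma norm_starProjection_sq_le {v : H} (hv : v ∈ V) :
    ‖U.starProjection v‖ ^ 2 ≤ (1 - cosAngle U Vᗮ ^ 2) * ‖v‖ ^ 2 := by
  set c := cosAngle U Vᗮ
  set q := U.starProjection v
  have hq : ‖q‖ ^ 2 = re ⟪q, v⟫_ℂ := (U.re_inner_starProjection_eq_normSq v).symm
  have hCS : ‖q‖ ^ 2 ≤ ‖Vᗮᗮ.starProjection q‖ * ‖v‖ :=
    hq ▸ Vᗮᗮ.re_inner_le_norm_starProjection_mul_norm q (V.le_orthogonal_orthogonal hv)
  have hpyth := Vᗮ.norm_sq_eq_add_norm_sq_starProjection q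
  have hcos : c * ‖q‖ ≤ ‖Vᗮ.starProjection q‖ :=
    cosAngle_mul_norm_le_norm_starProjection Vᗮ (U.starProjection_apply_mem v)
  have hc : 0 ≤ 1 - c ^ 2 := by nlinarith [cosAngle_nonneg U Vᗮ, cosAngle_le_one_s2 U Vᗮ]
  have hproj : ‖Vᗮᗮ.starProjection q‖ ^ 2 ≤ (1 - c ^ 2) * ‖q‖ ^ 2 := by
    nlinarith [pow_le_pow_left₀ (mul_nonneg (cosAngle_nonneg U Vᗮ) (norm_nonneg q)) hcos 2]
  rcases (sq_nonneg ‖q‖).eq_or_lt with hq0 | hqpos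
  · rw [← hq0]
    exact mul_nonneg hc (sq_nonneg _)
  · refine le_of_mul_le_mul_left ?_ hqpos
    calc ‖q‖ ^ 2 * ‖q‖ ^ 2 ≤ (‖Vᗮᗮ.starProjection q‖ * ‖v‖) ^ 2 := by
          rw [← sq]
          exact pow_le_pow_left₀ (sq_nonneg _) hCS 2
      _ ≤ (1 - c ^ 2) * ‖q‖ ^ 2 * ‖v‖ ^ 2 := by
          rw [mul_pow]
          gcongr
      _ = ‖q‖ ^ 2 * ((1 - c ^ 2) * ‖v‖ ^ 2) := by ring

lemma cosAngle_mul_norm_le_norm_sub_starProjection {v : H} (hv : v ∈ V) :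
    cosAngle U Vᗮ * ‖v‖ ≤ ‖v - U.starProjection v‖ := by
  have hpyth := U.norm_sq_eq_add_norm_sq_starProjection v
  rw [starProjection_orthogonal_val] at hpyth
  refine (pow_le_pow_iff_left₀ (mul_nonneg (cosAngle_nonneg U Vᗮ) (norm_nonneg v))
    (norm_nonneg _) two_ne_zero).1 ?_
  linarith [mul_pow (cosAngle U Vᗮ) ‖v‖ 2, norm_starProjection_sq_le (U := U) hv]

end CosAngle

theorem stmt2_general [NormedAddCommGroup H] [InnerProductSpace ℂ H]
    (U V : Submodule ℂ H)
    [HasOrthogonalProjection U] [HasOrthogonalProjection Vᗮ]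
    (hangle : 0 < cosAngle U Vᗮ)
    (f u v : H) (hu : u ∈ U) (hv : v ∈ V) (hf : f = u + v) :
    ‖f - (orthogonalProjection U f : H)‖ ≤ ‖f - u‖ ∧
      ‖f - u‖ ≤ (cosAngle U Vᗮ)⁻¹ * ‖f - (orthogonalProjection U f : H)‖ := by
  have hfu : f - u = v := by rw [hf, add_sub_cancel_left]
  have hres : f - U.starProjection f = v - U.starProjection v := by
    rw [hf, map_add, starProjection_eq_self_iff.mpr hu]
    abel
  refine ⟨U.norm_sub_starProjection_le_norm_sub f hu, ?_⟩
  rw [le_inv_mul_iff₀ hangle, hfu]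
  change _ ≤ ‖f - U.starProjection f‖
  rw [hres]
  exact cosAngle_mul_norm_le_norm_sub_starProjection hv

/-- with `cos θ_{U,Vᗮ} > 0` and `W` the oblique projection with range `U` and
kernel `V` defined on `H₀ = U ⊕ V`, every `f = u + v ∈ H₀` (with `u ∈ U`, `v ∈ V`, so `W f = u`)
satisfies `‖f - Q_U f‖ ≤ ‖f - W f‖ ≤ sec θ_{U,Vᗮ} ‖f - Q_U f‖`. -/
theorem stmt2 [NormedAddCommGroup H] [InnerProductSpace ℂ H] [CompleteSpace H]
    (U V : Submodule ℂ H) (hU : IsClosed (U : Set H)) (hV : IsClosed (V : Set H))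
    [HasOrthogonalProjection U] [HasOrthogonalProjection Vᗮ]
    (hUV : U ⊓ V = ⊥)
    (hangle : 0 < cosAngle U Vᗮ)
    (f u v : H) (hu : u ∈ U) (hv : v ∈ V) (hf : f = u + v) :
    ‖f - (orthogonalProjection U f : H)‖ ≤ ‖f - u‖ ∧
      ‖f - u‖ ≤ (cosAngle U Vᗮ)⁻¹ * ‖f - (orthogonalProjection U f : H)‖ :=
  stmt2_general U V hangle f u v hu hv hf
end

section
/- Let U and V be closed subspaces of a Hilbert space H satisfying cos(θ_{U,V⊥}) > 0, and suppose dim(U) = dim(V⊥) = n < ∞. Then U ⊕ V = H. -/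
open Submodule

variable {H : Type*}

/-! If `cos θ_{U,W} > 0`, the projection onto `W` is injective on `U`, i.e. `U ∩ Wᗮ = 0`.
When moreover `dim U = dim W < ∞`, it maps `U` onto `W`, and lifting `Q_W x` to `u ∈ U`
writes `x = u + (x - u)` with `x - u ∈ Wᗮ`. For `W = Vᗮ` with `V` closed, `Wᗮ = V`. -/

section

variable [NormedAddCommGroup H] [InnerProductSpace ℂ H]
  {U W : Submodule ℂ H} [HasOrthogonalProjection W]

theorem cosAngle_le_norm_orthogonalProjectionOnto {u : H} (hu : u ∈ U) (hnorm : ‖u‖ = 1) :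
    cosAngle U W ≤ ‖(orthogonalProjectionOnto W u : H)‖ :=
  csInf_le ⟨0, by rintro r ⟨v, -, -, rfl⟩; exact norm_nonneg _⟩ ⟨u, hu, hnorm, rfl⟩

theorem disjoint_orthogonal_of_cosAngle_pos (hangle : 0 < cosAngle U W) :
    Disjoint U Wᗮ := by
  rw [Submodule.disjoint_def]
  intro x hxU hxW
  by_contra hx
  have hxn : ‖x‖ ≠ 0 := norm_ne_zero_iff.mpr hx
  have hle := cosAngle_le_norm_orthogonalProjectionOnto (W := W)
    (U.smul_mem (‖x‖⁻¹ : ℂ) hxU) (by simp [norm_smul, inv_mul_cancel₀ hxn])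
  rw [orthogonalProjectionOnto_eq_zero_iff.mpr (Wᗮ.smul_mem _ hxW)] at hle
  simp only [ZeroMemClass.coe_zero, norm_zero] at hle
  linarith

theorem isCompl_orthogonal_of_disjoint [FiniteDimensional ℂ U] [FiniteDimensional ℂ W]
    (hdim : Module.finrank ℂ U = Module.finrank ℂ W) (hdisj : Disjoint U Wᗮ) :
    IsCompl U Wᗮ := by
  set f : U →ₗ[ℂ] W := (orthogonalProjectionOnto W).toLinearMap ∘ₗ U.subtype
  have hinj : Function.Injective f := by
    rw [← LinearMap.ker_eq_bot, Submodule.eq_bot_iff]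
    rintro ⟨u, hu⟩ hfu
    exact Subtype.ext <| Submodule.disjoint_def.mp hdisj u hu
      (orthogonalProjectionOnto_eq_zero_iff.mp hfu)
  have hsurj : Function.Surjective f :=
    (LinearMap.injective_iff_surjective_of_finrank_eq_finrank hdim).mp hinj
  refine ⟨hdisj, codisjoint_iff.mpr <| eq_top_iff.mpr fun x _ => ?_⟩
  obtain ⟨u, hu⟩ := hsurj (orthogonalProjectionOnto W x)
  have hxu : x - u ∈ Wᗮ := by
    rw [← orthogonalProjectionOnto_eq_zero_iff, map_sub, sub_eq_zero]
    exact hu.symm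
  simpa using Submodule.add_mem_sup u.2 hxu

end

theorem stmt3_general [NormedAddCommGroup H] [InnerProductSpace ℂ H] [CompleteSpace H]
    (U V : Submodule ℂ H) (hV : IsClosed (V : Set H))
    [HasOrthogonalProjection Vᗮ]
    [FiniteDimensional ℂ U] [FiniteDimensional ℂ Vᗮ] (n : ℕ)
    (hdimU : Module.finrank ℂ U = n) (hdimV : Module.finrank ℂ Vᗮ = n)
    (hangle : 0 < cosAngle U Vᗮ) :
    IsCompl U V := by
  have : CompleteSpace V := hV.completeSpace_coe
  have h := isCompl_orthogonal_of_disjoint (hdimU.trans hdimV.symm)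
    (disjoint_orthogonal_of_cosAngle_pos hangle)
  rwa [V.orthogonal_orthogonal] at h

/-- if `U`, `V` are closed subspaces with `cos θ_{U,Vᗮ} > 0` and
`dim U = dim Vᗮ = n < ∞`, then `U ⊕ V = H`. -/
theorem stmt3 [NormedAddCommGroup H] [InnerProductSpace ℂ H] [CompleteSpace H]
    (U V : Submodule ℂ H) (hU : IsClosed (U : Set H)) (hV : IsClosed (V : Set H))
    [HasOrthogonalProjection Vᗮ]
    [FiniteDimensional ℂ U] [FiniteDimensional ℂ Vᗮ] (n : ℕ)
    (hdimU : Module.finrank ℂ U = n) (hdimV : Module.finrank ℂ Vᗮ = n)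
    (hangle : 0 < cosAngle U Vᗮ) :
    IsCompl U V :=
  stmt3_general U V hV n hdimU hdimV hangle
end

section
/- Let {ψ_j}_{j=1}^m span a subspace S_m of H and let P_m g = Σ_{j=1}^m ⟨g,ψ_j⟩ψ_j. Suppose the restriction of P_m to S_m is invertible with lower frame bound c_{1,m} (i.e., ⟨P_m ψ, ψ⟩ ≥ c_{1,m}‖ψ‖² for ψ ∈ S_m) and upper bound c_{2,m}. Let T_n be a finite-dimensional subspace with D_{n,m} := (inf_{φ∈T_n,‖φ‖=1} ⟨P_m φ, φ⟩)^{-1/2} < ∞, and let θ_{n,m} be the angle between T_n and P_m(T_n). Then √(c_{1,m}) D_{n,m} ≤ sec(θ_{n,m}) ≤ √(c_{2,m}) D_{n,m}. -/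
/-!
Write `C f = (⟪ψ j, f⟫)ⱼ`, so that `⟪f, P g⟫ = ⟪C f, C g⟫`. Since `P` takes values in `S_m` and
`C` only sees the component of its argument in `S_m`, Cauchy–Schwarz and the frame bounds give
`√c₁ ‖C f‖ ≤ ‖P f‖ ≤ √c₂ ‖C f‖`. Let `Q` be the orthogonal projection onto `P(T)`. For `φ ∈ T`,
Cauchy–Schwarz applied to `‖C φ‖² = ⟪Q φ, P φ⟫` and to `‖Q φ‖² = ⟪C φ, C φ'⟫`, where
`Q φ = P φ'`, yields `√c₁ ‖Q φ‖ ≤ ‖C φ‖ ≤ √c₂ ‖Q φ‖`. Taking infima over the unit sphere of `T`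
gives `√c₁ cos θ ≤ D⁻¹ ≤ √c₂ cos θ`.
-/

open Submodule
open scoped InnerProductSpace

variable {H : Type*}

/-- The truncated frame operator `P_m g = Σ_{j=1}^m ⟨g,ψ_j⟩ψ_j`. -/
noncomputable def framePm [NormedAddCommGroup H] [InnerProductSpace ℂ H] {m : ℕ}
    (ψ : Fin m → H) : H →L[ℂ] H :=
  ∑ j, ((innerSL ℂ (ψ j)).smulRight (ψ j))

/-- The generalized sampling constant
`D_{n,m} = (inf_{φ ∈ T_n, ‖φ‖=1} ⟨P_m φ, φ⟩)^{-1/2}`, using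
`⟨P_m φ, φ⟩ = Σ_{j=1}^m |⟨φ,ψ_j⟩|²`. -/
noncomputable def Dconst [NormedAddCommGroup H] [InnerProductSpace ℂ H] {m : ℕ}
    (ψ : Fin m → H) (T : Submodule ℂ H) : ℝ :=
  (Real.sqrt (sInf {r : ℝ | ∃ φ ∈ T, ‖φ‖ = 1 ∧ r = ∑ j, ‖⟪ψ j, φ⟫_ℂ‖ ^ 2}))⁻¹

lemma mul_le_of_mul_sq_le_mul {k a r : ℝ} (ha : 0 ≤ a) (hr : 0 ≤ r) (h : k * a ^ 2 ≤ r * a) :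
    k * a ≤ r := by
  rcases ha.eq_or_lt with rfl | ha
  · simpa using hr
  · exact le_of_mul_le_mul_right (by linarith) ha

lemma le_of_sq_le_mul {a r : ℝ} (ha : 0 ≤ a) (hr : 0 ≤ r) (h : a ^ 2 ≤ r * a) : a ≤ r := by
  simpa using mul_le_of_mul_sq_le_mul (k := 1) ha hr (by simpa using h)

section FrameOperator

variable [NormedAddCommGroup H] [InnerProductSpace ℂ H] {m : ℕ}

noncomputable def frameCoeffs (ψ : Fin m → H) (f : H) : EuclideanSpace ℂ (Fin m) :=
  WithLp.toLp 2 fun j => ⟪ψ j, f⟫_ℂ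

variable (ψ : Fin m → H)

lemma framePm_apply (f : H) : framePm ψ f = ∑ j, frameCoeffs ψ f j • ψ j := by
  simp [framePm, frameCoeffs]

lemma inner_framePm (f g : H) : ⟪f, framePm ψ g⟫_ℂ = ⟪frameCoeffs ψ f, frameCoeffs ψ g⟫_ℂ := by
  simp only [framePm_apply, inner_sum, inner_smul_right, PiLp.inner_apply, frameCoeffs,
    RCLike.inner_apply]
  refine Finset.sum_congr rfl fun j _ => ?_
  rw [← inner_conj_symm (ψ j) f, starRingEnd_self_apply]

lemma norm_frameCoeffs_sq (f : H) : ‖frameCoeffs ψ f‖ ^ 2 = ∑ j, ‖⟪ψ j, f⟫_ℂ‖ ^ 2 := by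
  rw [EuclideanSpace.norm_eq, Real.sq_sqrt (by positivity)]
  rfl

lemma framePm_mem_span (f : H) : framePm ψ f ∈ span ℂ (Set.range ψ) := by
  rw [framePm_apply]
  exact sum_mem fun j _ => smul_mem _ _ (subset_span ⟨j, rfl⟩)

instance : FiniteDimensional ℂ (span ℂ (Set.range ψ)) :=
  FiniteDimensional.span_of_finite ℂ (Set.finite_range ψ)

lemma frameCoeffs_starProjection_span (f : H) :
    frameCoeffs ψ ((span ℂ (Set.range ψ)).starProjection f) = frameCoeffs ψ f := by
  have hψ (j : Fin m) : (span ℂ (Set.range ψ)).starProjection (ψ j) = ψ j :=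
    starProjection_eq_self_iff.mpr (subset_span ⟨j, rfl⟩)
  simp only [frameCoeffs, ← inner_starProjection_left_eq_right, hψ]

variable {ψ}

lemma norm_frameCoeffs_le_sqrt_mul {c : ℝ} {g : H} (h : ∑ j, ‖⟪ψ j, g⟫_ℂ‖ ^ 2 ≤ c * ‖g‖ ^ 2) :
    ‖frameCoeffs ψ g‖ ≤ √c * ‖g‖ := by
  rw [← Real.sqrt_sq (norm_nonneg (frameCoeffs ψ g)), norm_frameCoeffs_sq,
    ← Real.sqrt_sq (norm_nonneg g), ← Real.sqrt_mul' _ (sq_nonneg _)]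
  exact Real.sqrt_le_sqrt h

lemma sqrt_mul_le_norm_frameCoeffs {c : ℝ} {g : H} (h : c * ‖g‖ ^ 2 ≤ ∑ j, ‖⟪ψ j, g⟫_ℂ‖ ^ 2) :
    √c * ‖g‖ ≤ ‖frameCoeffs ψ g‖ := by
  rw [← Real.sqrt_sq (norm_nonneg (frameCoeffs ψ g)), norm_frameCoeffs_sq,
    ← Real.sqrt_sq (norm_nonneg g), ← Real.sqrt_mul' _ (sq_nonneg _)]
  exact Real.sqrt_le_sqrt h

lemma norm_framePm_le {b : ℝ} (hb : 0 ≤ b)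
    (hup : ∀ g ∈ span ℂ (Set.range ψ), ‖frameCoeffs ψ g‖ ≤ b * ‖g‖) (f : H) :
    ‖framePm ψ f‖ ≤ b * ‖frameCoeffs ψ f‖ := by
  refine le_of_sq_le_mul (norm_nonneg _) (by positivity) ?_
  calc ‖framePm ψ f‖ ^ 2 = RCLike.re ⟪framePm ψ f, framePm ψ f⟫_ℂ := by
        rw [inner_self_eq_norm_sq]
    _ = RCLike.re ⟪frameCoeffs ψ (framePm ψ f), frameCoeffs ψ f⟫_ℂ := by rw [inner_framePm]
    _ ≤ ‖frameCoeffs ψ (framePm ψ f)‖ * ‖frameCoeffs ψ f‖ := re_inner_le_norm _ _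
    _ ≤ b * ‖framePm ψ f‖ * ‖frameCoeffs ψ f‖ := by
        gcongr; exact hup _ (framePm_mem_span ψ f)
    _ = b * ‖frameCoeffs ψ f‖ * ‖framePm ψ f‖ := by ring

lemma le_norm_framePm {a : ℝ} (ha : 0 ≤ a)
    (hlo : ∀ g ∈ span ℂ (Set.range ψ), a * ‖g‖ ≤ ‖frameCoeffs ψ g‖) (f : H) :
    a * ‖frameCoeffs ψ f‖ ≤ ‖framePm ψ f‖ := by
  set g := (span ℂ (Set.range ψ)).starProjection f
  have hCg : frameCoeffs ψ g = frameCoeffs ψ f := frameCoeffs_starProjection_span ψ f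
  have hPg : framePm ψ g = framePm ψ f := by rw [framePm_apply, framePm_apply, hCg]
  rw [← hCg, ← hPg]
  refine mul_le_of_mul_sq_le_mul (norm_nonneg _) (norm_nonneg _) ?_
  calc a * ‖frameCoeffs ψ g‖ ^ 2 = a * RCLike.re ⟪g, framePm ψ g⟫_ℂ := by
        rw [inner_framePm, inner_self_eq_norm_sq]
    _ ≤ a * (‖g‖ * ‖framePm ψ g‖) := by gcongr; exact re_inner_le_norm _ _
    _ = a * ‖g‖ * ‖framePm ψ g‖ := by ring
    _ ≤ ‖frameCoeffs ψ g‖ * ‖framePm ψ g‖ := by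
        gcongr; exact hlo g (starProjection_apply_mem _ f)
    _ = ‖framePm ψ g‖ * ‖frameCoeffs ψ g‖ := by ring

variable {W : Submodule ℂ H} [W.HasOrthogonalProjection]

lemma norm_frameCoeffs_le_mul_norm_starProjection {b : ℝ} (hb : 0 ≤ b)
    (hup : ∀ g ∈ span ℂ (Set.range ψ), ‖frameCoeffs ψ g‖ ≤ b * ‖g‖) {φ : H}
    (hφ : framePm ψ φ ∈ W) : ‖frameCoeffs ψ φ‖ ≤ b * ‖W.starProjection φ‖ := by
  refine le_of_sq_le_mul (norm_nonneg _) (by positivity) ?_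
  calc ‖frameCoeffs ψ φ‖ ^ 2 = RCLike.re ⟪W.starProjection φ, framePm ψ φ⟫_ℂ := by
        rw [inner_starProjection_left_eq_right, starProjection_eq_self_iff.mpr hφ,
          inner_framePm, inner_self_eq_norm_sq]
    _ ≤ ‖W.starProjection φ‖ * ‖framePm ψ φ‖ := re_inner_le_norm _ _
    _ ≤ ‖W.starProjection φ‖ * (b * ‖frameCoeffs ψ φ‖) := by
        gcongr; exact norm_framePm_le hb hup φ
    _ = b * ‖W.starProjection φ‖ * ‖frameCoeffs ψ φ‖ := by ring

lemma mul_norm_starProjection_le_norm_frameCoeffs {a : ℝ} (ha : 0 ≤ a)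
    (hlo : ∀ g ∈ span ℂ (Set.range ψ), a * ‖g‖ ≤ ‖frameCoeffs ψ g‖)
    (hW : W ≤ LinearMap.range (framePm ψ : H →ₗ[ℂ] H)) (φ : H) :
    a * ‖W.starProjection φ‖ ≤ ‖frameCoeffs ψ φ‖ := by
  obtain ⟨φ', hφ'⟩ : ∃ φ', framePm ψ φ' = W.starProjection φ :=
    hW (W.starProjection_apply_mem φ)
  refine mul_le_of_mul_sq_le_mul (norm_nonneg _) (norm_nonneg _) ?_
  calc a * ‖W.starProjection φ‖ ^ 2 = a * RCLike.re ⟪φ, framePm ψ φ'⟫_ℂ := by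
        rw [hφ', ← inner_starProjection_left_eq_right, re_inner_starProjection_eq_normSq]; rfl
    _ = a * RCLike.re ⟪frameCoeffs ψ φ, frameCoeffs ψ φ'⟫_ℂ := by rw [inner_framePm]
    _ ≤ a * (‖frameCoeffs ψ φ‖ * ‖frameCoeffs ψ φ'‖) := by gcongr; exact re_inner_le_norm _ _
    _ = ‖frameCoeffs ψ φ‖ * (a * ‖frameCoeffs ψ φ'‖) := by ring
    _ ≤ ‖frameCoeffs ψ φ‖ * ‖W.starProjection φ‖ := by
        gcongr; exact hφ' ▸ le_norm_framePm ha hlo φ'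

end FrameOperator

lemma inv_iInf_bounds_of_forall_le {ι : Sort*} {f g : ι → ℝ} {a b : ℝ} (ha : 0 ≤ a)
    (hb : 0 ≤ b) (hg : ∀ i, 0 ≤ g i) (hf : 0 < ⨅ i, f i) (hlo : ∀ i, a * g i ≤ f i)
    (hup : ∀ i, f i ≤ b * g i) :
    a * (⨅ i, f i)⁻¹ ≤ (⨅ i, g i)⁻¹ ∧ (⨅ i, g i)⁻¹ ≤ b * (⨅ i, f i)⁻¹ := by
  have hlo' : a * ⨅ i, g i ≤ ⨅ i, f i := by
    rw [Real.mul_iInf_of_nonneg ha]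
    exact ciInf_mono ⟨0, by rintro _ ⟨i, rfl⟩; exact mul_nonneg ha (hg i)⟩ hlo
  have hup' : ⨅ i, f i ≤ b * ⨅ i, g i := by
    rw [Real.mul_iInf_of_nonneg hb]
    exact ciInf_mono ⟨0, by rintro _ ⟨i, rfl⟩; exact (mul_nonneg ha (hg i)).trans (hlo i)⟩ hup
  have hg0 : 0 < ⨅ i, g i := pos_of_mul_pos_right (hf.trans_le hup') hb
  constructor
  · rw [← div_eq_mul_inv, div_le_iff₀ hf, inv_mul_eq_div, le_div_iff₀ hg0]
    exact hlo'
  · rw [← div_eq_mul_inv, le_div_iff₀ hf, inv_mul_eq_div, div_le_iff₀ hg0]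
    exact hup'

lemma sInf_setOf_unit_eq_iInf {𝕜 E : Type*} [Semiring 𝕜] [SeminormedAddCommGroup E] [Module 𝕜 E]
    (T : Submodule 𝕜 E) (F : E → ℝ) :
    sInf {r : ℝ | ∃ φ ∈ T, ‖φ‖ = 1 ∧ r = F φ} =
      ⨅ φ : ↥((T : Set E) ∩ Metric.sphere 0 1), F φ := by
  congr 1
  ext r
  simp [eq_comm, and_assoc]

section Infima

variable [NormedAddCommGroup H] [InnerProductSpace ℂ H]

lemma cosAngle_eq_iInf (U W : Submodule ℂ H) [W.HasOrthogonalProjection] :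
    cosAngle U W = ⨅ φ : ↥((U : Set H) ∩ Metric.sphere 0 1), ‖W.starProjection φ‖ :=
  sInf_setOf_unit_eq_iInf U _

lemma sqrt_sInf_eq_iInf_norm_frameCoeffs {m : ℕ} (ψ : Fin m → H) (T : Submodule ℂ H) :
    √(sInf {r : ℝ | ∃ φ ∈ T, ‖φ‖ = 1 ∧ r = ∑ j, ‖⟪ψ j, φ⟫_ℂ‖ ^ 2}) =
      ⨅ φ : ↥((T : Set H) ∩ Metric.sphere 0 1), ‖frameCoeffs ψ φ‖ := by
  rw [sInf_setOf_unit_eq_iInf T fun φ => ∑ j, ‖⟪ψ j, φ⟫_ℂ‖ ^ 2]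
  simp_rw [← norm_frameCoeffs_sq]
  cases isEmpty_or_nonempty ↥((T : Set H) ∩ Metric.sphere 0 1)
  · simp
  · rw [Monotone.map_ciInf_of_continuousAt Real.continuous_sqrt.continuousAt
      (fun _ _ => Real.sqrt_le_sqrt) ⟨0, by rintro _ ⟨φ, rfl⟩; positivity⟩]
    simp_rw [Real.sqrt_sq (norm_nonneg _)]

end Infima

theorem stmt9_general [NormedAddCommGroup H] [InnerProductSpace ℂ H]
    {m : ℕ} (ψ : Fin m → H) (T : Submodule ℂ H) [FiniteDimensional ℂ T]
    (c1m c2m : ℝ)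
    (hframe : ∀ g ∈ Submodule.span ℂ (Set.range ψ),
      c1m * ‖g‖ ^ 2 ≤ ∑ j, ‖⟪ψ j, g⟫_ℂ‖ ^ 2 ∧ ∑ j, ‖⟪ψ j, g⟫_ℂ‖ ^ 2 ≤ c2m * ‖g‖ ^ 2)
    (hD : 0 < sInf {r : ℝ | ∃ φ ∈ T, ‖φ‖ = 1 ∧ r = ∑ j, ‖⟪ψ j, φ⟫_ℂ‖ ^ 2}) :
    Real.sqrt c1m * Dconst ψ T ≤ (cosAngle T (T.map ((framePm ψ : H →L[ℂ] H) : H →ₗ[ℂ] H)))⁻¹ ∧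
    (cosAngle T (T.map ((framePm ψ : H →L[ℂ] H) : H →ₗ[ℂ] H)))⁻¹ ≤ Real.sqrt c2m * Dconst ψ T := by
  have hinf : 0 < ⨅ φ : ↥((T : Set H) ∩ Metric.sphere 0 1), ‖frameCoeffs ψ φ‖ :=
    sqrt_sInf_eq_iInf_norm_frameCoeffs ψ T ▸ Real.sqrt_pos.mpr hD
  rw [cosAngle_eq_iInf, Dconst, sqrt_sInf_eq_iInf_norm_frameCoeffs]
  refine inv_iInf_bounds_of_forall_le (Real.sqrt_nonneg c1m) (Real.sqrt_nonneg c2m)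
    (fun _ => norm_nonneg _) hinf (fun φ => ?_) (fun φ => ?_)
  · exact mul_norm_starProjection_le_norm_frameCoeffs (Real.sqrt_nonneg c1m)
      (fun g hg => sqrt_mul_le_norm_frameCoeffs (hframe g hg).1) (LinearMap.map_le_range) φ
  · exact norm_frameCoeffs_le_mul_norm_starProjection (Real.sqrt_nonneg c2m)
      (fun g hg => norm_frameCoeffs_le_sqrt_mul (hframe g hg).2) (mem_map_of_mem φ.2.1)

/-- if `{ψ_1,…,ψ_m}` has frame bounds `c_{1,m}, c_{2,m}` for `S_m = span{ψ_j}`,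
and `T_n` is finite-dimensional with `D_{n,m} < ∞`, then
`√c_{1,m} D_{n,m} ≤ sec θ_{n,m} ≤ √c_{2,m} D_{n,m}`, where `θ_{n,m}` is the angle between
`T_n` and `P_m(T_n)`. -/
theorem stmt9 [NormedAddCommGroup H] [InnerProductSpace ℂ H] [CompleteSpace H]
    {m : ℕ} (ψ : Fin m → H) (T : Submodule ℂ H) [FiniteDimensional ℂ T]
    (c1m c2m : ℝ) (hc1 : 0 < c1m) (hc2 : 0 < c2m)
    (hframe : ∀ g ∈ Submodule.span ℂ (Set.range ψ),
      c1m * ‖g‖ ^ 2 ≤ ∑ j, ‖⟪ψ j, g⟫_ℂ‖ ^ 2 ∧ ∑ j, ‖⟪ψ j, g⟫_ℂ‖ ^ 2 ≤ c2m * ‖g‖ ^ 2)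
    (hD : 0 < sInf {r : ℝ | ∃ φ ∈ T, ‖φ‖ = 1 ∧ r = ∑ j, ‖⟪ψ j, φ⟫_ℂ‖ ^ 2}) :
    Real.sqrt c1m * Dconst ψ T ≤ (cosAngle T (T.map ((framePm ψ : H →L[ℂ] H) : H →ₗ[ℂ] H)))⁻¹ ∧
    (cosAngle T (T.map ((framePm ψ : H →L[ℂ] H) : H →ₗ[ℂ] H)))⁻¹ ≤ Real.sqrt c2m * Dconst ψ T :=
  stmt9_general ψ T c1m c2m hframe hD
end

section
/- Any perfect reconstruction method has condition number at least that of generalized sampling: if G : H → T_n depends only on the samples f̂^{[m]} = (⟨f,ψ_j⟩)_{j=1}^m, satisfies G(f) = f for all f ∈ T_n, and D_{n,m} = (inf_{φ∈T_n,‖φ‖=1}⟨P_mφ,φ⟩)^{-1/2} is finite and nonzero, then κ(G) ≥ D_{n,m}, where κ(G) = sup_{f∈H} lim_{ε→0⁺} sup_{g∈H, 0<‖ĝ^{[m]}‖≤ε} ‖G(f+g)−G(f)‖/‖ĝ^{[m]}‖. -/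
/-!
Perturb `f = 0` along the line through a fixed `φ ∈ T_n`. Since `G` fixes `T_n`,
`G (t • φ) - G 0 = t • φ`, so the difference quotient in the definition of `κ(G)` equals
`‖φ‖ / ‖φ̂^{[m]}‖` for every `t ≠ 0`, while the size `|t| ‖φ̂^{[m]}‖` of the perturbed samples
can be made as small as we like.
Hence `κ(G) ≥ ‖φ̂^{[m]}‖⁻¹` for every unit `φ ∈ T_n`, and the supremum of the right-hand side
over such `φ` is `D_{n,m}`.
-/

open Submodule
open scoped InnerProductSpace

variable {H : Type*}

section Sampling

variable (𝕜 : Type*) [RCLike 𝕜] [NormedAddCommGroup H] [InnerProductSpace 𝕜 H] {m : ℕ}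

/-- The sample map `f ↦ f̂^{[m]} = (⟪ψ j, f⟫)_j`, valued in `ℓ²(Fin m)`. -/
noncomputable def sampleMap (ψ : Fin m → H) : H →ₗ[𝕜] EuclideanSpace 𝕜 (Fin m) :=
  (WithLp.linearEquiv 2 𝕜 (Fin m → 𝕜)).symm.toLinearMap ∘ₗ
    LinearMap.pi fun j => innerₛₗ 𝕜 (ψ j)

variable {𝕜}

theorem norm_sampleMap (ψ : Fin m → H) (g : H) :
    ‖sampleMap 𝕜 ψ g‖ = √(∑ j, ‖⟪ψ j, g⟫_𝕜‖ ^ 2) := by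
  simp [EuclideanSpace.norm_eq, sampleMap]

theorem norm_sampleMap_sq (ψ : Fin m → H) (g : H) :
    ‖sampleMap 𝕜 ψ g‖ ^ 2 = ∑ j, ‖⟪ψ j, g⟫_𝕜‖ ^ 2 := by
  simp [EuclideanSpace.norm_sq_eq, sampleMap]

theorem norm_div_norm_sampleMap_le_of_perfect {ψ : Fin m → H} {T : Submodule 𝕜 H} {G : H → H}
    (hperfect : ∀ f ∈ T, G f = f) {κ : ℝ}
    (hκ : ∀ C : ℝ, (∀ ε : ℝ, 0 < ε → ∃ g : H,
        0 < ‖sampleMap 𝕜 ψ g‖ ∧ ‖sampleMap 𝕜 ψ g‖ ≤ ε ∧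
        C ≤ ‖G (0 + g) - G 0‖ / ‖sampleMap 𝕜 ψ g‖) → C ≤ κ)
    {φ : H} (hφ : φ ∈ T) (hφ_samples : sampleMap 𝕜 ψ φ ≠ 0) :
    ‖φ‖ / ‖sampleMap 𝕜 ψ φ‖ ≤ κ := by
  have hpos : 0 < ‖sampleMap 𝕜 ψ φ‖ := norm_pos_iff.mpr hφ_samples
  refine hκ _ fun ε hε => ?_
  set t : ℝ := ε / ‖sampleMap 𝕜 ψ φ‖
  have ht : 0 < t := div_pos hε hpos
  have ht_mul : t * ‖sampleMap 𝕜 ψ φ‖ = ε := div_mul_cancel₀ _ hpos.ne'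
  have h_samples : ‖sampleMap 𝕜 ψ ((t : 𝕜) • φ)‖ = ε := by
    rw [map_smul, norm_smul, RCLike.norm_ofReal, abs_of_pos ht, ht_mul]
  have h_diff : G (0 + (t : 𝕜) • φ) - G 0 = (t : 𝕜) • φ := by
    rw [zero_add, hperfect _ (T.smul_mem _ hφ), hperfect 0 T.zero_mem, sub_zero]
  refine ⟨(t : 𝕜) • φ, h_samples ▸ hε, h_samples.le, ?_⟩
  rw [h_diff, h_samples, norm_smul, RCLike.norm_ofReal, abs_of_pos ht, ← ht_mul, mul_div_mul_left _ _ ht.ne']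

end Sampling

theorem inv_sqrt_sInf_le {S : Set ℝ} (hS : S.Nonempty) (hpos : ∀ a ∈ S, 0 < a) {κ : ℝ}
    (hle : ∀ a ∈ S, (√a)⁻¹ ≤ κ) : (√(sInf S))⁻¹ ≤ κ := by
  obtain ⟨a₀, ha₀⟩ := hS
  have hκ : 0 < κ := (inv_pos.mpr (Real.sqrt_pos.mpr (hpos a₀ ha₀))).trans_le (hle a₀ ha₀)
  have h_sq_le : ∀ a ∈ S, κ⁻¹ ^ 2 ≤ a := fun a ha =>
    (Real.le_sqrt (by positivity) (hpos a ha).le).mp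
      (inv_le_of_inv_le₀ (Real.sqrt_pos.mpr (hpos a ha)) (hle a ha))
  have h_inv_le : κ⁻¹ ≤ √(sInf S) :=
    Real.le_sqrt_of_sq_le (le_csInf ⟨a₀, ha₀⟩ h_sq_le)
  exact inv_le_of_inv_le₀ hκ h_inv_le

theorem stmt14_general [NormedAddCommGroup H] [InnerProductSpace ℂ H]
    {m : ℕ} (ψ : Fin m → H) (T : Submodule ℂ H)
    (hD : 0 < sInf {r : ℝ | ∃ φ ∈ T, ‖φ‖ = 1 ∧ r = ∑ j, ‖⟪ψ j, φ⟫_ℂ‖ ^ 2})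
    (G : H → H)
    (hperfect : ∀ f ∈ T, G f = f)
    (κ : ℝ)
    (hκ : ∀ (f : H) (C : ℝ),
      (∀ ε : ℝ, 0 < ε → ∃ g : H,
        0 < Real.sqrt (∑ j, ‖⟪ψ j, g⟫_ℂ‖ ^ 2) ∧
        Real.sqrt (∑ j, ‖⟪ψ j, g⟫_ℂ‖ ^ 2) ≤ ε ∧
        C ≤ ‖G (f + g) - G f‖ / Real.sqrt (∑ j, ‖⟪ψ j, g⟫_ℂ‖ ^ 2)) → C ≤ κ) :
    Dconst ψ T ≤ κ := by
  simp only [← norm_sampleMap] at hκ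
  rw [Dconst]
  set S := {r : ℝ | ∃ φ ∈ T, ‖φ‖ = 1 ∧ r = ∑ j, ‖⟪ψ j, φ⟫_ℂ‖ ^ 2}
  have hS_bdd : BddBelow S := ⟨0, by rintro _ ⟨φ, -, -, rfl⟩; positivity⟩
  have hS_ne : S.Nonempty := by
    contrapose! hD
    simp [hD]
  have hS_pos : ∀ a ∈ S, 0 < a := fun a ha => hD.trans_le (csInf_le hS_bdd ha)
  refine inv_sqrt_sInf_le hS_ne hS_pos ?_
  rintro _ ⟨φ, hφT, hφ_norm, rfl⟩
  have h_samples : sampleMap ℂ ψ φ ≠ 0 := by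
    intro h_zero
    have h_sum_pos := hS_pos _ ⟨φ, hφT, hφ_norm, rfl⟩
    rw [← norm_sampleMap_sq, h_zero, norm_zero] at h_sum_pos
    norm_num at h_sum_pos
  rw [← norm_sampleMap, ← one_div, ← hφ_norm]
  exact norm_div_norm_sampleMap_le_of_perfect hperfect (hκ 0) hφT h_samples

/-- any perfect reconstruction method `G` (depending only on the samples
`f̂^{[m]} = (⟨f,ψ_j⟩)_{j=1}^m` and fixing `T_n` pointwise) has condition number at least
`D_{n,m}`.  Here `κ` is any real satisfying the defining property of the condition number
`κ(G) = sup_f lim_{ε→0⁺} sup_{0<‖ĝ^{[m]}‖≤ε} ‖G(f+g)−G(f)‖/‖ĝ^{[m]}‖`: namely, `κ` dominates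
every quantity `C` that, for some `f` and every `ε > 0`, is attained up to `ε`-small
perturbations. -/
theorem stmt14 [NormedAddCommGroup H] [InnerProductSpace ℂ H] [CompleteSpace H]
    {m : ℕ} (ψ : Fin m → H) (T : Submodule ℂ H) [FiniteDimensional ℂ T]
    (hD : 0 < sInf {r : ℝ | ∃ φ ∈ T, ‖φ‖ = 1 ∧ r = ∑ j, ‖⟪ψ j, φ⟫_ℂ‖ ^ 2})
    (G : H → H)
    (hfactor : ∀ f g : H, (∀ j, ⟪ψ j, f⟫_ℂ = ⟪ψ j, g⟫_ℂ) → G f = G g)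
    (hrange : ∀ f : H, G f ∈ T)
    (hperfect : ∀ f ∈ T, G f = f)
    (κ : ℝ)
    (hκ : ∀ (f : H) (C : ℝ),
      (∀ ε : ℝ, 0 < ε → ∃ g : H,
        0 < Real.sqrt (∑ j, ‖⟪ψ j, g⟫_ℂ‖ ^ 2) ∧
        Real.sqrt (∑ j, ‖⟪ψ j, g⟫_ℂ‖ ^ 2) ≤ ε ∧
        C ≤ ‖G (f + g) - G f‖ / Real.sqrt (∑ j, ‖⟪ψ j, g⟫_ℂ‖ ^ 2)) → C ≤ κ) :
    Dconst ψ T ≤ κ :=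
  stmt14_general ψ T hD G hperfect κ hκ
end

section
/- If G : H → T_n depends only on the samples f̂^{[m]} and is λ-contractive on T_n, i.e., ‖f − G(f)‖ ≤ λ‖f‖ for all f ∈ T_n with 0 ≤ λ < 1, then κ(G) ≥ (1 − λ) D_{n,m}, with κ and D_{n,m} defined as above. -/
open Submodule
open scoped InnerProductSpace

variable {H : Type*}

/-- any reconstruction method `G` depending only on the samples and
`λ`-contractive on `T_n` (`‖f − G(f)‖ ≤ λ‖f‖` for `f ∈ T_n`, `0 ≤ λ < 1`) has condition
number at least `(1−λ) D_{n,m}`. -/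
theorem stmt15 [NormedAddCommGroup H] [InnerProductSpace ℂ H] [CompleteSpace H]
    {m : ℕ} (ψ : Fin m → H) (T : Submodule ℂ H) [FiniteDimensional ℂ T]
    (hD : 0 < sInf {r : ℝ | ∃ φ ∈ T, ‖φ‖ = 1 ∧ r = ∑ j, ‖⟪ψ j, φ⟫_ℂ‖ ^ 2})
    (G : H → H)
    (hfactor : ∀ f g : H, (∀ j, ⟪ψ j, f⟫_ℂ = ⟪ψ j, g⟫_ℂ) → G f = G g)
    (lam : ℝ) (hlam0 : 0 ≤ lam) (hlam1 : lam < 1)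
    (hcontr : ∀ f ∈ T, ‖f - G f‖ ≤ lam * ‖f‖)
    (κ : ℝ)
    (hκ : ∀ (f : H) (C : ℝ),
      (∀ ε : ℝ, 0 < ε → ∃ g : H,
        0 < Real.sqrt (∑ j, ‖⟪ψ j, g⟫_ℂ‖ ^ 2) ∧
        Real.sqrt (∑ j, ‖⟪ψ j, g⟫_ℂ‖ ^ 2) ≤ ε ∧
        C ≤ ‖G (f + g) - G f‖ / Real.sqrt (∑ j, ‖⟪ψ j, g⟫_ℂ‖ ^ 2)) → C ≤ κ) :
    (1 - lam) * Dconst ψ T ≤ κ := by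
  classical
  set S : Set ℝ := {r : ℝ | ∃ φ ∈ T, ‖φ‖ = 1 ∧ r = ∑ j, ‖⟪ψ j, φ⟫_ℂ‖ ^ 2} with hS
  have hbdd : BddBelow S := by
    refine ⟨0, fun r hr => ?_⟩
    obtain ⟨φ, _, _, rfl⟩ := hr
    exact Finset.sum_nonneg fun j _ => by positivity
  have hD' : 0 < sInf S := hD
  have hSne : S.Nonempty := by
    by_contra h
    rw [Set.not_nonempty_iff_eq_empty] at h
    rw [h, Real.sInf_empty] at hD'
    exact lt_irrefl 0 hD' 
  have hlam1' : 0 < 1 - lam := by linarith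
  have hG0 : G 0 = 0 := by
    have := hcontr 0 T.zero_mem
    simp only [norm_zero, mul_zero, zero_sub, norm_neg] at this
    have : ‖G 0‖ = 0 := le_antisymm this (norm_nonneg _)
    simpa using this
  -- key claim
  have key : ∀ φ ∈ T, ‖φ‖ = 1 →
      (1 - lam) / Real.sqrt (∑ j, ‖⟪ψ j, φ⟫_ℂ‖ ^ 2) ≤ κ := by
    intro φ hφT hφ
    set sφ : ℝ := ∑ j, ‖⟪ψ j, φ⟫_ℂ‖ ^ 2 with hsφdef
    have hsφ : 0 < sφ := lt_of_lt_of_le hD' (csInf_le hbdd ⟨φ, hφT, hφ, rfl⟩)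
    have hsqrt : 0 < Real.sqrt sφ := Real.sqrt_pos.mpr hsφ
    refine hκ 0 _ ?_
    intro ε hε
    set t : ℝ := ε / Real.sqrt sφ with htdef
    have ht : 0 < t := div_pos hε hsqrt
    refine ⟨(t : ℂ) • φ, ?_⟩
    have hsum : (∑ j, ‖⟪ψ j, (t : ℂ) • φ⟫_ℂ‖ ^ 2) = t ^ 2 * sφ := by
      rw [hsφdef, Finset.mul_sum]
      refine Finset.sum_congr rfl fun j _ => ?_
      rw [inner_smul_right, norm_mul, Complex.norm_real, Real.norm_eq_abs, abs_of_pos ht, mul_pow]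
    have hsqrtsum : Real.sqrt (∑ j, ‖⟪ψ j, (t : ℂ) • φ⟫_ℂ‖ ^ 2) = ε := by
      rw [hsum]
      rw [Real.sqrt_mul (sq_nonneg t) sφ]
      rw [Real.sqrt_sq ht.le]
      rw [htdef]
      rw [div_mul_cancel₀ _ hsqrt.ne']
    rw [hsqrtsum]
    refine ⟨hε, le_refl ε, ?_⟩
    rw [zero_add, hG0, sub_zero]
    have hmem : (t : ℂ) • φ ∈ T := T.smul_mem _ hφT
    have hnorm : ‖(t : ℂ) • φ‖ = t := by
      rw [norm_smul, Complex.norm_real, Real.norm_eq_abs, abs_of_pos ht, hφ, mul_one]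
    have hlow : (1 - lam) * t ≤ ‖G ((t : ℂ) • φ)‖ := by
      have h1 := hcontr _ hmem
      rw [hnorm] at h1
      have h2 : ‖(t : ℂ) • φ‖ - ‖G ((t : ℂ) • φ)‖ ≤ ‖(t : ℂ) • φ - G ((t : ℂ) • φ)‖ :=
        norm_sub_norm_le _ _
      rw [hnorm] at h2
      nlinarith
    calc (1 - lam) / Real.sqrt sφ = (1 - lam) * t / ε := by
          rw [htdef]
          rw [eq_div_iff hε.ne']
          field_simp
      _ ≤ ‖G ((t : ℂ) • φ)‖ / ε := by gcongr
  -- κ is positive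
  have hSne2 := hSne
  obtain ⟨r0, φ0, hφ0T, hφ0, hr0⟩ := hSne2
  have hκpos : 0 < κ := by
    have h := key φ0 hφ0T hφ0
    have hs0 : 0 < (∑ j, ‖⟪ψ j, φ0⟫_ℂ‖ ^ 2) :=
      lt_of_lt_of_le hD' (csInf_le hbdd ⟨φ0, hφ0T, hφ0, rfl⟩)
    exact lt_of_lt_of_le (div_pos hlam1' (Real.sqrt_pos.mpr hs0)) h
  -- lower bound on sInf S
  have hinf : ((1 - lam) / κ) ^ 2 ≤ sInf S := by
    refine le_csInf hSne fun r hr => ?_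
    obtain ⟨φ, hφT, hφ, rfl⟩ := hr
    have h := key φ hφT hφ
    have hs : 0 < (∑ j, ‖⟪ψ j, φ⟫_ℂ‖ ^ 2) :=
      lt_of_lt_of_le hD' (csInf_le hbdd ⟨φ, hφT, hφ, rfl⟩)
    have hsq : 0 < Real.sqrt (∑ j, ‖⟪ψ j, φ⟫_ℂ‖ ^ 2) := Real.sqrt_pos.mpr hs
    have h2 : (1 - lam) / κ ≤ Real.sqrt (∑ j, ‖⟪ψ j, φ⟫_ℂ‖ ^ 2) := by
      rw [div_le_iff₀ hκpos]
      rw [div_le_iff₀ hsq] at h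
      linarith [h]
    calc ((1 - lam) / κ) ^ 2 ≤ (Real.sqrt (∑ j, ‖⟪ψ j, φ⟫_ℂ‖ ^ 2)) ^ 2 := by
          apply pow_le_pow_left₀ (by positivity) h2
      _ = _ := Real.sq_sqrt hs.le
  have hsqS : (1 - lam) / κ ≤ Real.sqrt (sInf S) := by
    calc (1 - lam) / κ = Real.sqrt (((1 - lam) / κ) ^ 2) :=
          (Real.sqrt_sq (by positivity)).symm
      _ ≤ _ := Real.sqrt_le_sqrt hinf
  have hpos : 0 < (1 - lam) / κ := div_pos hlam1' hκpos
  have hinv : (Real.sqrt (sInf S))⁻¹ ≤ κ / (1 - lam) := by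
    rw [← one_div, div_le_div_iff₀ (lt_of_lt_of_le hpos hsqS) hlam1']
    rw [div_le_iff₀ hκpos] at hsqS
    linarith
  rw [Dconst, ← hS]
  calc (1 - lam) * (Real.sqrt (sInf S))⁻¹
      ≤ (1 - lam) * (κ / (1 - lam)) := mul_le_mul_of_nonneg_left hinv hlam1'.le
    _ = κ := by field_simp
end

section
/- Suppose F_{N,m} is the generalized sampling reconstruction with quasi-optimality constant θ (i.e., ‖f − F_{N,m}(f)‖ ≤ θ‖f − Q_N f‖) where N = Ψ(m) ≥ a·m for some a > 0, and suppose f ∈ H satisfies c₁(f) n^{−α} ≤ ‖f − Q_n f‖ ≤ c₂(f) n^{−α} for all n with constants c₁(f), c₂(f), α > 0. Then for any sequence of maps G_m with G_m(f) ∈ T_{Ψ_f(m)} where Ψ_f(m) ≤ c·m, there is a constant C(f,θ,a,c) such that ‖f − F_{Ψ(m),m}(f)‖ ≤ C ‖f − G_m(f)‖ for all m, since ‖f − G_m(f)‖ ≥ ‖f − Q_{Ψ_f(m)} f‖. -/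
open Submodule

variable {H : Type*}

/-! Two-sided algebraic decay `e n ≍ n^{-α}` of the best-approximation error makes `e` comparable
at any two indices, up to the factor `(k / n)^α`. Since `G m ∈ T (Ψf m)` cannot beat the best
approximation `Q_{Ψf m} f`, and `Ψf m / Ψ m ≤ c / a`, the quasi-optimal error `θ e (Ψ m)` is then
bounded by a constant times `‖f - G m‖`. -/

theorem Submodule.norm_sub_starProjection_le_of_mem {𝕜 E : Type*} [RCLike 𝕜]
    [NormedAddCommGroup E] [InnerProductSpace 𝕜 E] (U : Submodule 𝕜 E) [U.HasOrthogonalProjection]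
    (y : E) {x : E} (hx : x ∈ U) : ‖y - U.starProjection y‖ ≤ ‖y - x‖ := by
  rw [starProjection_minimal]
  exact ciInf_le ⟨0, by rintro _ ⟨z, rfl⟩; exact norm_nonneg _⟩ (⟨x, hx⟩ : U)

theorem le_div_mul_rpow_mul_of_rpow_bounds {e : ℕ → ℝ} {α c₁ c₂ : ℝ} (hc₁ : 0 < c₁)
    (he : ∀ n : ℕ, 1 ≤ n → c₁ * (n : ℝ) ^ (-α) ≤ e n ∧ e n ≤ c₂ * (n : ℝ) ^ (-α))
    {n k : ℕ} (hn : 1 ≤ n) (hk : 1 ≤ k) :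
    e n ≤ c₂ / c₁ * ((k : ℝ) / n) ^ α * e k := by
  have hn₀ : (0 : ℝ) < n := by exact_mod_cast hn
  have hk₀ : (0 : ℝ) < k := by exact_mod_cast hk
  have hc₂ : 0 ≤ c₂ := by
    have := (he n hn).1.trans (he n hn).2
    exact hc₁.le.trans (le_of_mul_le_mul_right this (by positivity))
  calc e n ≤ c₂ * (n : ℝ) ^ (-α) := (he n hn).2
    _ = c₂ / c₁ * ((k : ℝ) / n) ^ α * (c₁ * (k : ℝ) ^ (-α)) := by
        rw [Real.rpow_neg hn₀.le, Real.rpow_neg hk₀.le, Real.div_rpow hk₀.le hn₀.le]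
        field_simp
    _ ≤ c₂ / c₁ * ((k : ℝ) / n) ^ α * e k := by
        gcongr
        exact (he k hk).1

theorem div_le_div_of_linear_bounds {a c : ℝ} {p q m : ℕ} (ha : 0 < a) (hm : 1 ≤ m)
    (hp : (p : ℝ) ≤ c * m) (hq : a * (m : ℝ) ≤ q) : (p : ℝ) / q ≤ c / a := by
  have hm₀ : (0 : ℝ) < m := by exact_mod_cast hm
  calc (p : ℝ) / q ≤ c * m / (a * m) := div_le_div₀ ((Nat.cast_nonneg p).trans hp) hp (by positivity) hq
    _ = c / a := mul_div_mul_right c a hm₀.ne'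

theorem stmt16_general [NormedAddCommGroup H] [InnerProductSpace ℂ H]
    (T : ℕ → Submodule ℂ H) [∀ n, FiniteDimensional ℂ (T n)]
    (f : H) (θ a c α cf1 cf2 : ℝ)
    (hθ : 0 < θ) (ha : 0 < a) (hc : 0 < c) (hα : 0 < α) (hcf1 : 0 < cf1) (hcf2 : 0 < cf2)
    (Ψ Ψf : ℕ → ℕ) (F G : ℕ → H)
    (hΨ : ∀ m : ℕ, a * (m : ℝ) ≤ (Ψ m : ℝ)) (hΨ1 : ∀ m, 1 ≤ Ψ m)
    (hΨf : ∀ m : ℕ, (Ψf m : ℝ) ≤ c * (m : ℝ)) (hΨf1 : ∀ m, 1 ≤ Ψf m)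
    (hF : ∀ m, ‖f - F m‖ ≤ θ * ‖f - (orthogonalProjection (T (Ψ m)) f : H)‖)
    (hG : ∀ m, G m ∈ T (Ψf m))
    (hdecay : ∀ n : ℕ, 1 ≤ n →
      cf1 * (n : ℝ) ^ (-α) ≤ ‖f - (orthogonalProjection (T n) f : H)‖ ∧
      ‖f - (orthogonalProjection (T n) f : H)‖ ≤ cf2 * (n : ℝ) ^ (-α)) :
    ∃ C : ℝ, 0 < C ∧ ∀ m : ℕ, 1 ≤ m → ‖f - F m‖ ≤ C * ‖f - G m‖ := by
  set e : ℕ → ℝ := fun n => ‖f - (T n).starProjection f‖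
  refine ⟨θ * (cf2 / cf1 * (c / a) ^ α), by positivity, fun m hm => ?_⟩
  have hratio : ((Ψf m : ℝ) / Ψ m) ^ α ≤ (c / a) ^ α :=
    Real.rpow_le_rpow (by positivity) (div_le_div_of_linear_bounds ha hm (hΨf m) (hΨ m)) hα.le
  calc ‖f - F m‖ ≤ θ * e (Ψ m) := hF m
    _ ≤ θ * (cf2 / cf1 * ((Ψf m : ℝ) / Ψ m) ^ α * e (Ψf m)) := by
        gcongr
        exact le_div_mul_rpow_mul_of_rpow_bounds hcf1 hdecay (hΨ1 m) (hΨf1 m)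
    _ ≤ θ * (cf2 / cf1 * (c / a) ^ α * ‖f - G m‖) := by
        gcongr
        exact (T (Ψf m)).norm_sub_starProjection_le_of_mem f (hG m)
    _ = θ * (cf2 / cf1 * (c / a) ^ α) * ‖f - G m‖ := by ring

/-- if generalized sampling `F_{Ψ(m),m}` is quasi-optimal with constant `θ` and
linear stable sampling rate `Ψ(m) ≥ a·m`, and `f` satisfies the algebraic decay
`c₁(f) n^{−α} ≤ ‖f − Q_n f‖ ≤ c₂(f) n^{−α}`, then for any sequence of maps `G_m` with
`G_m(f) ∈ T_{Ψ_f(m)}`, `Ψ_f(m) ≤ c·m`, there is a constant `C` such that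
`‖f − F_{Ψ(m),m}(f)‖ ≤ C‖f − G_m(f)‖` for all `m`. -/
theorem stmt16 [NormedAddCommGroup H] [InnerProductSpace ℂ H] [CompleteSpace H]
    (T : ℕ → Submodule ℂ H) [∀ n, FiniteDimensional ℂ (T n)]
    (f : H) (θ a c α cf1 cf2 : ℝ)
    (hθ : 0 < θ) (ha : 0 < a) (hc : 0 < c) (hα : 0 < α) (hcf1 : 0 < cf1) (hcf2 : 0 < cf2)
    (Ψ Ψf : ℕ → ℕ) (F G : ℕ → H)
    (hΨ : ∀ m : ℕ, a * (m : ℝ) ≤ (Ψ m : ℝ)) (hΨ1 : ∀ m, 1 ≤ Ψ m)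
    (hΨf : ∀ m : ℕ, (Ψf m : ℝ) ≤ c * (m : ℝ)) (hΨf1 : ∀ m, 1 ≤ Ψf m)
    (hF : ∀ m, ‖f - F m‖ ≤ θ * ‖f - (orthogonalProjection (T (Ψ m)) f : H)‖)
    (hG : ∀ m, G m ∈ T (Ψf m))
    (hdecay : ∀ n : ℕ, 1 ≤ n →
      cf1 * (n : ℝ) ^ (-α) ≤ ‖f - (orthogonalProjection (T n) f : H)‖ ∧
      ‖f - (orthogonalProjection (T n) f : H)‖ ≤ cf2 * (n : ℝ) ^ (-α)) :
    ∃ C : ℝ, 0 < C ∧ ∀ m : ℕ, 1 ≤ m → ‖f - F m‖ ≤ C * ‖f - G m‖ :=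
  stmt16_general T f θ a c α cf1 cf2 hθ ha hc hα hcf1 hcf2 Ψ Ψf F G hΨ hΨ1 hΨf hΨf1 hF hG hdecay
end
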